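/- arXiv:1908.08944 — 2 statements merged into one kernel-verified Lean document; each statement's English description precedes it below -/
import Mathlib

section
/- In a 'suitable' model category, the full subcategory of fibrant objects is closed under finite coproducts and under exponentials, and hence is a bicartesian closed category with the inclusion into the ambient category a bicartesian closed functor. -/
open CategoryTheory CategoryTheory.Limits

/-- A model structure on a category `C`: classes of weak equivalences, cofibrations and
fibrations satisfying two-out-of-three, the lifting axioms (in the strong form in which the
(trivial) cofibrations are characterized by the lifting property, which also encodes retract
closure), and the two factorization axioms. -/
structure ModelStruct (C : Type*) [Category C] where
  weq : MorphismProperty C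
  cof : MorphismProperty C
  fib : MorphismProperty C
  weq_of_iso : ∀ {X Y : C} (f : X ⟶ Y), IsIso f → weq f
  weq_comp : ∀ {X Y Z : C} (f : X ⟶ Y) (g : Y ⟶ Z), weq f → weq g → weq (f ≫ g)
  weq_cancel_left : ∀ {X Y Z : C} (f : X ⟶ Y) (g : Y ⟶ Z), weq f → weq (f ≫ g) → weq g
  weq_cancel_right : ∀ {X Y Z : C} (f : X ⟶ Y) (g : Y ⟶ Z), weq g → weq (f ≫ g) → weq f
  cof_iff_llp : ∀ {A B : C} (i : A ⟶ B),
    cof i ↔ ∀ {X Y : C} (q : X ⟶ Y), fib q → weq q → HasLiftingProperty i q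
  fib_iff_rlp : ∀ {X Y : C} (q : X ⟶ Y),
    fib q ↔ ∀ {A B : C} (i : A ⟶ B), cof i → weq i → HasLiftingProperty i q
  fact_left : ∀ {X Y : C} (f : X ⟶ Y), ∃ (Z : C) (i : X ⟶ Z) (q : Z ⟶ Y),
    cof i ∧ weq i ∧ fib q ∧ i ≫ q = f
  fact_right : ∀ {X Y : C} (f : X ⟶ Y), ∃ (Z : C) (i : X ⟶ Z) (q : Z ⟶ Y),
    cof i ∧ fib q ∧ weq q ∧ i ≫ q = f

variable {C : Type*} [Category C]

/-- Right properness: weak equivalences are stable under pullback along fibrations. -/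
def ModelStruct.RightProper (M : ModelStruct C) : Prop :=
  ∀ {W X Y Z : C} (p' : W ⟶ X) (f' : W ⟶ Y) (f : X ⟶ Z) (q : Y ⟶ Z),
    IsPullback p' f' f q → M.fib q → M.weq f → M.weq f'

/-- An object is fibrant if its map to a terminal object is a fibration. -/
def ModelStruct.Fibrant (M : ModelStruct C) (X : C) : Prop :=
  ∃ (T : C) (hT : IsTerminal T), M.fib (hT.from X)

/-- An object is cofibrant if the map from an initial object is a cofibration. -/
def ModelStruct.Cofibrant (M : ModelStruct C) (X : C) : Prop :=
  ∃ (I : C) (hI : IsInitial I), M.cof (hI.to X)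

open MonoidalCategory
open CartesianClosed

/-!
Fibrations are exactly the maps with the right lifting property against trivial cofibrations, so
they contain the isomorphisms and are closed under composition and base change; this gives the
terminal object and products, while (iii) gives the initial object and coproducts. For
exponentials, `X ⟹ -` is right adjoint to `X ⊗ -`, so it preserves fibrations as soon as `X ⊗ -`
preserves trivial cofibrations. For fibrant `X` this holds because `X ⊗ i` is the base change of
`i` along the fibration `X ⊗ B ⟶ B`: it is a monomorphism, and a weak equivalence by right
properness.
-/

namespace ModelStruct

variable (M : ModelStruct C)

lemma fib_eq_rlp : M.fib = (M.cof ⊓ M.weq).rlp := by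
  ext X Y q
  rw [M.fib_iff_rlp]
  exact ⟨fun h _ _ i hi => h i hi.1 hi.2, fun h _ _ i hc hw => h i ⟨hc, hw⟩⟩

instance : M.fib.IsMultiplicative := by
  rw [fib_eq_rlp]
  infer_instance

instance : M.fib.IsStableUnderBaseChange := by
  rw [fib_eq_rlp]
  infer_instance

variable {M}

lemma fib_of_isIso {X Y : C} (f : X ⟶ Y) [IsIso f] : M.fib f :=
  M.fib_eq_rlp ▸ MorphismProperty.rlp_of_isIso _ f

lemma fibrant_iff_fib_from {X T : C} (hT : IsTerminal T) :
    M.Fibrant X ↔ M.fib (hT.from X) := by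
  refine ⟨fun ⟨T', hT', hX⟩ => ?_, fun hX => ⟨T, hT, hX⟩⟩
  rw [hT.hom_ext (hT.from X) (hT'.from X ≫ (hT'.uniqueUpToIso hT).hom)]
  exact M.fib.comp_mem _ _ hX (fib_of_isIso _)

lemma fibrant_of_isTerminal {T : C} (hT : IsTerminal T) : M.Fibrant T :=
  (fibrant_iff_fib_from hT).2 (hT.hom_ext (𝟙 T) (hT.from T) ▸ M.fib.id_mem T)

lemma Fibrant.coprod [HasBinaryCoproducts C]
    (hfib_coprod : ∀ {A B X : C} (f : A ⟶ X) (g : B ⟶ X),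
      M.fib f → M.fib g → M.fib (coprod.desc f g))
    {X Y : C} (hX : M.Fibrant X) (hY : M.Fibrant Y) : M.Fibrant (X ⨿ Y) := by
  obtain ⟨T, hT, hX⟩ := hX
  rw [fibrant_iff_fib_from hT] at hY ⊢
  rw [hT.hom_ext (hT.from _) (coprod.desc (hT.from X) (hT.from Y))]
  exact hfib_coprod _ _ hX hY

lemma fib_map_of_adjunction {D : Type*} [Category D] {N : ModelStruct D} {F : C ⥤ D}
    {G : D ⥤ C} (adj : F ⊣ G)
    (hF : ∀ {A B : C} (i : A ⟶ B), M.cof i → M.weq i → N.cof (F.map i) ∧ N.weq (F.map i))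
    {X Y : D} {p : X ⟶ Y} (hp : N.fib p) : M.fib (G.map p) := by
  rw [M.fib_iff_rlp]
  intro A B i hc hw
  rw [← adj.hasLiftingProperty_iff]
  exact (N.fib_iff_rlp p).1 hp _ (hF i hc hw).1 (hF i hc hw).2

end ModelStruct

open CartesianMonoidalCategory

section Cartesian

variable [CartesianMonoidalCategory C]

lemma isPullback_fst_snd_toUnit (X Y : C) :
    IsPullback (fst X Y) (snd X Y) (toUnit X) (toUnit Y) :=
  IsPullback.of_is_product' (tensorProductIsBinaryProduct X Y) isTerminalTensorUnit

lemma isPullback_snd_whiskerLeft (X : C) {A B : C} (i : A ⟶ B) :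
    IsPullback (snd X A) (X ◁ i) i (snd X B) := by
  refine (IsPullback.of_right (h₁₂ := fst X B) (h₂₂ := toUnit B) (v₁₃ := toUnit X)
    ?_ (by simp) (isPullback_fst_snd_toUnit X B)).flip
  simpa using isPullback_fst_snd_toUnit X A

lemma mono_whiskerLeft (X : C) {A B : C} (i : A ⟶ B) [Mono i] : Mono (X ◁ i) :=
  (isPullback_snd_whiskerLeft X i).mono_snd_of_mono

namespace ModelStruct

variable {M : ModelStruct C}

lemma fib_snd_of_fibrant {X : C} (hX : M.Fibrant X) (Y : C) : M.fib (snd X Y) :=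
  M.fib.of_isPullback (isPullback_fst_snd_toUnit X Y)
    ((fibrant_iff_fib_from isTerminalTensorUnit).1 hX)

lemma Fibrant.tensorObj {X Y : C} (hX : M.Fibrant X) (hY : M.Fibrant Y) :
    M.Fibrant (X ⊗ Y) := by
  rw [fibrant_iff_fib_from isTerminalTensorUnit] at hY ⊢
  rw [isTerminalTensorUnit.hom_ext (isTerminalTensorUnit.from _)
    (snd X Y ≫ isTerminalTensorUnit.from Y)]
  exact M.fib.comp_mem _ _ (fib_snd_of_fibrant hX Y) hY

lemma weq_whiskerLeft (hrp : M.RightProper) {X : C} (hX : M.Fibrant X) {A B : C}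
    {i : A ⟶ B} (hi : M.weq i) : M.weq (X ◁ i) :=
  hrp _ _ _ _ (isPullback_snd_whiskerLeft X i) (fib_snd_of_fibrant hX B) hi

lemma fib_ihom_map [MonoidalClosed C] (hrp : M.RightProper)
    (hcof : ∀ {X Y : C} (f : X ⟶ Y), M.cof f ↔ Mono f) {X : C} (hX : M.Fibrant X)
    {Y Z : C} {p : Y ⟶ Z} (hp : M.fib p) : M.fib ((ihom X).map p) :=
  fib_map_of_adjunction (ihom.adjunction X) (fun i hc hw =>
    have := (hcof i).1 hc
    ⟨(hcof _).2 (mono_whiskerLeft X i), weq_whiskerLeft hrp hX hw⟩) hp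

lemma Fibrant.exp [MonoidalClosed C] (hrp : M.RightProper)
    (hcof : ∀ {X Y : C} (f : X ⟶ Y), M.cof f ↔ Mono f) {X Y : C} (hX : M.Fibrant X)
    (hY : M.Fibrant Y) : M.Fibrant (X ⟹ Y) := by
  have hT : IsTerminal (X ⟹ 𝟙_ C) := isTerminalTensorUnit.isTerminalObj (ihom X)
  rw [fibrant_iff_fib_from isTerminalTensorUnit] at hY
  rw [fibrant_iff_fib_from hT, hT.hom_ext (hT.from _) ((ihom X).map (toUnit Y))]
  exact fib_ihom_map hrp hcof hX hY

end ModelStruct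

end Cartesian

theorem fibrant_closed_under_bicartesian_closed_structure_general {C : Type*} [Category C]
    [CartesianMonoidalCategory C] [MonoidalClosed C] [HasInitial C] [HasBinaryCoproducts C]
    (M : ModelStruct C)
    (hrp : M.RightProper)
    (hcof : ∀ {X Y : C} (f : X ⟶ Y), M.cof f ↔ Mono f)
    (hfib_coprod : ∀ {A B X : C} (f : A ⟶ X) (g : B ⟶ X),
      M.fib f → M.fib g → M.fib (coprod.desc f g))
    (hfib_initial : ∀ A : C, M.fib (initial.to A)) :
    M.Fibrant (𝟙_ C) ∧ M.Fibrant (⊥_ C) ∧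
      (∀ X Y : C, M.Fibrant X → M.Fibrant Y →
        M.Fibrant (X ⊗ Y) ∧ M.Fibrant (X ⨿ Y) ∧ M.Fibrant (X ⟹ Y)) := by
  have hT : IsTerminal (𝟙_ C) := isTerminalTensorUnit
  refine ⟨ModelStruct.fibrant_of_isTerminal hT, ?_,
    fun X Y hX hY => ⟨hX.tensorObj hY, hX.coprod hfib_coprod hY, hX.exp hrp hcof hY⟩⟩
  rw [ModelStruct.fibrant_iff_fib_from hT, hT.hom_ext (hT.from _) (initial.to _)]
  exact hfib_initial _

/-- In a *suitable* model category — one which is (i) right proper,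
(ii) has cofibrations exactly the monomorphisms, (iii) has `[f,g] : A ⨿ B ⟶ X` a fibration
whenever `f` and `g` are, and `0 ⟶ A` always a fibration, and (iv) is locally cartesian
closed (in particular cartesian closed with finite coproducts) as a category — the fibrant
objects are closed under the terminal object, binary products, the initial object, binary
coproducts, and exponentials; hence they form a bicartesian closed full subcategory with
bicartesian closed inclusion. -/
theorem fibrant_closed_under_bicartesian_closed_structure {C : Type*} [Category C]
    [CartesianMonoidalCategory C] [MonoidalClosed C] [HasInitial C] [HasBinaryCoproducts C]
    (M : ModelStruct C)
    (hrp : M.RightProper)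
    (hcof : ∀ {X Y : C} (f : X ⟶ Y), M.cof f ↔ Mono f)
    (hfib_coprod : ∀ {A B X : C} (f : A ⟶ X) (g : B ⟶ X),
      M.fib f → M.fib g → M.fib (coprod.desc f g))
    (hfib_initial : ∀ A : C, M.fib (initial.to A))
    (hlcc : ∀ X : C, ∃ h : CartesianMonoidalCategory (Over X),
      Nonempty (@MonoidalClosed (Over X) _ h.toMonoidalCategory)) :
    M.Fibrant (𝟙_ C) ∧ M.Fibrant (⊥_ C) ∧
      (∀ X Y : C, M.Fibrant X → M.Fibrant Y →
        M.Fibrant (X ⊗ Y) ∧ M.Fibrant (X ⨿ Y) ∧ M.Fibrant (X ⟹ Y)) :=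
  fibrant_closed_under_bicartesian_closed_structure_general M hrp hcof hfib_coprod hfib_initial
end

section
/- 2-of-3 for cartesian 1-cells in a 1D2F: given a 1D2F p : C → B, 1-cells p : P → Q over f, q : Q → R over g, r : P → R over h, and a 2-cell σ : r → q∘p lying over an invertible 2-cell α : h → g∘f, if q and r are cartesian then so is p. -/
open CategoryTheory CategoryTheory.Bicategory

namespace FOHL

variable (C : Type*) (B : Type*) [Bicategory C] [Bicategory.Strict C]
  [Bicategory B] [Bicategory.Strict B]

/-- A (strict) 2-functor between strict 2-categories: a functor on underlying 1-categories
together with an action on 2-cells, strictly compatible with vertical composition,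
identities and whiskering. -/
structure TwoFunctor where
  toFunctor : C ⥤ B
  map₂ : ∀ {a b : C} {f g : a ⟶ b}, (f ⟶ g) → (toFunctor.map f ⟶ toFunctor.map g)
  map₂_id : ∀ {a b : C} (f : a ⟶ b), map₂ (𝟙 f) = 𝟙 (toFunctor.map f)
  map₂_comp : ∀ {a b : C} {f g h : a ⟶ b} (η : f ⟶ g) (θ : g ⟶ h),
    map₂ (η ≫ θ) = map₂ η ≫ map₂ θ
  map₂_whiskerLeft : ∀ {a b c : C} (f : a ⟶ b) {g h : b ⟶ c} (η : g ⟶ h),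
    map₂ (f ◁ η) = eqToHom (toFunctor.map_comp f g) ≫ (toFunctor.map f ◁ map₂ η) ≫
      eqToHom (toFunctor.map_comp f h).symm
  map₂_whiskerRight : ∀ {a b c : C} {f g : a ⟶ b} (η : f ⟶ g) (h : b ⟶ c),
    map₂ (η ▷ h) = eqToHom (toFunctor.map_comp f h) ≫ (map₂ η ▷ toFunctor.map h) ≫
      eqToHom (toFunctor.map_comp g h).symm

variable {C B}

/-- Auxiliary inductive expressing that a 2-cell `η` of `C` lies over a 2-cell `θ` of `B`
with respect to the 2-functor `P` (cf. `CategoryTheory.IsHomLiftAux`). -/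
inductive IsTwoCellLiftAux (P : TwoFunctor C B) :
    ∀ {R S : B} {u v : R ⟶ S}, (u ⟶ v) → ∀ {a b : C} {f g : a ⟶ b}, (f ⟶ g) → Prop
  | map {a b : C} {f g : a ⟶ b} (η : f ⟶ g) : IsTwoCellLiftAux P (P.map₂ η) η

/-- The 2-cell `η` of `C` lies over the 2-cell `θ` of `B`. -/
def TwoFunctor.IsLift₂ (P : TwoFunctor C B) {R S : B} {u v : R ⟶ S} (θ : u ⟶ v)
    {a b : C} {f g : a ⟶ b} (η : f ⟶ g) : Prop :=
  IsTwoCellLiftAux P θ η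

/-- `P` is a 1-discrete 2-fibration: the underlying functor of 1-categories is a Grothendieck
fibration and, for every 2-cell `α` of the base and every 1-cell lying over its domain, there
is a unique 2-cell lying over `α` with that 1-cell as domain. -/
structure TwoFunctor.Is1D2F (P : TwoFunctor C B) : Prop where
  fibered : P.toFunctor.IsFibered
  lift₂ : ∀ {R S : B} {u v : R ⟶ S} (α : u ⟶ v) {a b : C} (m : a ⟶ b),
    P.toFunctor.IsHomLift u m →
      ∃! gη : Σ g' : a ⟶ b, m ⟶ g', P.IsLift₂ α gη.2

/-- A 1-cell in a (strict) 2-category is an equivalence if it admits a quasi-inverse. -/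
def IsEquivalenceOneCell {a b : C} (f : a ⟶ b) : Prop :=
  ∃ g : b ⟶ a, Nonempty (𝟙 a ≅ f ≫ g) ∧ Nonempty (𝟙 b ≅ g ≫ f)

end FOHL

open CategoryTheory CategoryTheory.Functor FOHL


/-!
Transport along `σ` makes `pm ≫ q` strongly cartesian over `f ≫ g`: a lift of `u ≫ (f ≫ g)` is
moved along a lift of `u ◁ inv α` to a lift of `u ≫ h`, factored through `r`, and moved back
along `ξ ◁ σ`. Both round trips lie over identity 2-cells, and in a 1D2F a 2-cell over an
identity 2-cell has equal domain and codomain, the identity 2-cell being its unique lift.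
Cartesianness of `pm` then follows from that of `q` and of `pm ≫ q`.
-/

namespace FOHL

variable {C B : Type*} [Bicategory C] [Bicategory.Strict C]
  [Bicategory B] [Bicategory.Strict B] {P : TwoFunctor C B}

namespace TwoFunctor

lemma isLift₂_iff {R S : B} {u v : R ⟶ S} {θ : u ⟶ v} {a b : C} {f g : a ⟶ b} {η : f ⟶ g} :
    P.IsLift₂ θ η ↔ ∃ (_ : R = P.toFunctor.obj a) (_ : S = P.toFunctor.obj b),
      HEq u (P.toFunctor.map f) ∧ HEq v (P.toFunctor.map g) ∧ HEq θ (P.map₂ η) := by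
  constructor
  · rintro ⟨⟩
    exact ⟨rfl, rfl, .rfl, .rfl, .rfl⟩
  · rintro ⟨rfl, rfl, hu, hv, hθ⟩
    cases eq_of_heq hu
    cases eq_of_heq hv
    cases eq_of_heq hθ
    exact .map η

lemma IsLift₂.isHomLift_dom {R S : B} {u v : R ⟶ S} {θ : u ⟶ v} {a b : C}
    {f g : a ⟶ b} {η : f ⟶ g} (hθ : P.IsLift₂ θ η) : P.toFunctor.IsHomLift u f := by
  cases hθ
  infer_instance

lemma IsLift₂.isHomLift_cod {R S : B} {u v : R ⟶ S} {θ : u ⟶ v} {a b : C}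
    {f g : a ⟶ b} {η : f ⟶ g} (hθ : P.IsLift₂ θ η) : P.toFunctor.IsHomLift v g := by
  cases hθ
  infer_instance

lemma IsLift₂.comp {R S : B} {u v w : R ⟶ S} {θ : u ⟶ v} {θ' : v ⟶ w}
    {a b : C} {f g k : a ⟶ b} {η : f ⟶ g} {η' : g ⟶ k}
    (hθ : P.IsLift₂ θ η) (hθ' : P.IsLift₂ θ' η') : P.IsLift₂ (θ ≫ θ') (η ≫ η') := by
  cases hθ
  obtain ⟨-, -, -, hw, hθ'⟩ := isLift₂_iff.1 hθ'
  cases eq_of_heq hw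
  cases eq_of_heq hθ'
  exact P.map₂_comp η η' ▸ IsTwoCellLiftAux.map (η ≫ η')

lemma isLift₂_id {R S : B} {u : R ⟶ S} {a b : C} {f : a ⟶ b}
    (hf : P.toFunctor.IsHomLift u f) : P.IsLift₂ (𝟙 u) (𝟙 f) := by
  cases hf
  exact P.map₂_id f ▸ IsTwoCellLiftAux.map (𝟙 f)

lemma isLift₂_of_eqToHom_comp_comp {R S : B} {u u' v v' : R ⟶ S} (hu : u = u') (hv : v' = v)
    {θ : u' ⟶ v'} {a b : C} {f g : a ⟶ b} {η : f ⟶ g}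
    (hθ : P.IsLift₂ (eqToHom hu ≫ θ ≫ eqToHom hv) η) : P.IsLift₂ θ η := by
  subst hu hv
  simpa using hθ

lemma IsLift₂.whiskerLeft {R' R S : B} {u : R' ⟶ R} {x y : R ⟶ S}
    {T a b : C} {ξ : T ⟶ a} {f g : a ⟶ b} {θ : x ⟶ y} {η : f ⟶ g}
    (hξ : P.toFunctor.IsHomLift u ξ) (hθ : P.IsLift₂ θ η) : P.IsLift₂ (u ◁ θ) (ξ ◁ η) := by
  cases hθ
  have := hξ
  obtain rfl := IsHomLift.domain_eq P.toFunctor u ξ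
  obtain rfl := IsHomLift.eq_of_isHomLift P.toFunctor u ξ
  exact isLift₂_of_eqToHom_comp_comp _ _ (P.map₂_whiskerLeft ξ η ▸ IsTwoCellLiftAux.map (ξ ◁ η))

lemma Is1D2F.eq_of_isLift₂_of_comp_eq_id (hP : P.Is1D2F) {R S : B} {u v : R ⟶ S}
    {α : u ⟶ v} {β : v ⟶ u} (hαβ : α ≫ β = 𝟙 u) {a b : C} {m m' m'' : a ⟶ b}
    {η : m ⟶ m'} {η' : m' ⟶ m''} (hη : P.IsLift₂ α η) (hη' : P.IsLift₂ β η') : m'' = m := by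
  have hm := hη.isHomLift_dom
  have hcomp := hη.comp hη'
  rw [hαβ] at hcomp
  exact congrArg Sigma.fst ((hP.lift₂ (𝟙 u) m hm).unique (y₁ := ⟨m'', η ≫ η'⟩) (y₂ := ⟨m, 𝟙 m⟩)
    hcomp (isLift₂_id hm))

lemma Is1D2F.isStronglyCartesian_of_isLift₂ (hP : P.Is1D2F) {S T : B} {a b : C}
    {h k : S ⟶ T} (α : h ⟶ k) [IsIso α] {r s : a ⟶ b}
    (hr : P.toFunctor.IsStronglyCartesian h r) {σ : r ⟶ s} (hσ : P.IsLift₂ α σ) :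
    P.toFunctor.IsStronglyCartesian k s := by
  have : P.toFunctor.IsHomLift k s := hσ.isHomLift_cod
  refine ⟨fun {c} u φ hφ => ?_⟩
  obtain ⟨⟨t, τ⟩, hτ, -⟩ := hP.lift₂ (u ◁ inv α) φ hφ
  have : P.toFunctor.IsHomLift (u ≫ h) t := hτ.isHomLift_cod
  obtain ⟨ξ, ⟨hξ, rfl⟩, hξ_uniq⟩ := hr.universal_property' u t
  refine ⟨ξ, ⟨hξ, ?_⟩, ?_⟩
  · exact hP.eq_of_isLift₂_of_comp_eq_id (by rw [← Bicategory.whiskerLeft_comp]; simp) hτ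
      (hσ.whiskerLeft hξ)
  · rintro χ ⟨hχ, rfl⟩
    exact hξ_uniq χ ⟨hχ, hP.eq_of_isLift₂_of_comp_eq_id
      (by rw [← Bicategory.whiskerLeft_comp]; simp) (hσ.whiskerLeft hχ) hτ |>.symm⟩

end TwoFunctor

end FOHL

/-- 2-of-3 for cartesian 1-cells in a 1D2F. Given a 1D2F `P : C ⥤ B`,
1-cells `pm : P₀ ⟶ Q₀` over `f`, `q : Q₀ ⟶ R₀` over `g`, `r : P₀ ⟶ R₀` over `h`, and a
2-cell `σ : r ⟶ pm ≫ q` lying over an invertible 2-cell `α : h ⟶ g ∘ f`, if `q` and `r`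
are cartesian then so is `pm`. -/
theorem oneD2F_cartesian_two_of_three
    {C B : Type*} [Bicategory C] [Bicategory.Strict C] [Bicategory B] [Bicategory.Strict B]
    (P : TwoFunctor C B) (hP : P.Is1D2F)
    {A B₀ C₀ : B} {P₀ Q₀ R₀ : C}
    (f : A ⟶ B₀) (g : B₀ ⟶ C₀) (h : A ⟶ C₀) (α : h ⟶ f ≫ g) (hα : IsIso α)
    (pm : P₀ ⟶ Q₀) (hpm : P.toFunctor.IsHomLift f pm)
    (q : Q₀ ⟶ R₀) (hq : P.toFunctor.IsStronglyCartesian g q)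
    (r : P₀ ⟶ R₀) (hr : P.toFunctor.IsStronglyCartesian h r)
    (σ : r ⟶ pm ≫ q) (hσ : P.IsLift₂ α σ) :
    P.toFunctor.IsStronglyCartesian f pm := by
  have : P.toFunctor.IsStronglyCartesian (f ≫ g) (pm ≫ q) :=
    hP.isStronglyCartesian_of_isLift₂ α hr hσ
  exact IsStronglyCartesian.of_comp P.toFunctor (g := g) (ψ := q)
end
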